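/- Let x ∈ 𝔻. If the record time trimmer R_trim is J1-continuous at x, i.e. for every sequence x_n ∈ 𝔻 converging to x in the J1-topology the sequence R_trim(x_n) converges to R_trim(x) in the J1-topology, then #A⁺₁(x) ≤ 1, i.e. the set A⁺₁(x) of times of the largest positive jump of x on (0,1] has at most one element. -/

import Mathlib

/-!
Suppose `s < t` both carry the largest positive jump `h` of `x`. Adding `εₙ • 1_{[t,1]}` with
`εₙ → 0` gives càdlàg `xₙ → x` uniformly whose largest positive jump sits at `t` alone, so
`R_trim(xₙ) = x - h • 1_{[t,1]} =: y` for every `n`, while `R_trim(x)` removes the jump at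
`R₁(x) ≤ s`. A `J₁`-limit of the constant sequence `y` takes at each `τ` one of the values `y(τ-)`,
`y(τ)`. At `τ = t` this forces `Δx(R₁(x)) = h`, and then at every `τ ∈ (s,t)` it forces
`Δx(τ) = h > 0`; but the jumps of a càdlàg function tend to `0` from the left of every point.
-/

open Filter Topology Set unitInterval

noncomputable section

open scoped Classical

instance : Fact ((0:ℝ) ≤ 1) := ⟨zero_le_one⟩

/-- The space `𝔻` of càdlàg functions on `[0,1]`: right-continuous everywhere with
finite left limits everywhere (conditions at the endpoints hold vacuously). -/
def Cadlag (x : I → ℝ) : Prop :=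
  (∀ τ : I, Tendsto x (𝓝[>] τ) (𝓝 (x τ))) ∧ (∀ τ : I, ∃ l : ℝ, Tendsto x (𝓝[<] τ) (𝓝 l))

/-- The sup-norm `‖x‖ = sup_{0 ≤ τ ≤ 1} |x(τ)|`. -/
def dNorm (x : I → ℝ) : ℝ := ⨆ τ : I, |x τ|

/-- The jump `Δx(τ) = x(τ) - x(τ-)` of `x` at `τ`, with `Δx(0) := 0`. -/
def jump (x : I → ℝ) (τ : I) : ℝ := if τ = 0 then 0 else x τ - Function.leftLim x τ

/-- The running supremum `S(x)(τ) = sup_{0 ≤ s ≤ τ} x(s)`. -/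
def runSup (x : I → ℝ) (τ : I) : ℝ := sSup (x '' {s : I | s ≤ τ})

/-- The running absolute supremum `S̃(x)(τ) = sup_{0 ≤ s ≤ τ} |x(s)|`. -/
def runAbsSup (x : I → ℝ) (τ : I) : ℝ := sSup ((fun s => |x s|) '' {s : I | s ≤ τ})

/-- The largest positive jump `S_{+Δ}(x)(τ) = sup_{0 ≤ s ≤ τ} Δx(s)`. -/
def posJumpSup (x : I → ℝ) (τ : I) : ℝ := sSup (jump x '' {s : I | s ≤ τ})

/-- The largest modulus jump `S̃_Δ(x)(τ) = sup_{0 ≤ s ≤ τ} |Δx(s)|`. -/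
def modJumpSup (x : I → ℝ) (τ : I) : ℝ := sSup ((fun s => |jump x s|) '' {s : I | s ≤ τ})

/-- The first extremal positive trimming ("trim as you go") operator
`T^{(1,+)}_{rim}(x) = x - S_{+Δ}(x)`. -/
def trimPos (x : I → ℝ) : I → ℝ := fun τ => x τ - posJumpSup x τ

/-- `Λ`: continuous strictly increasing bijections of `[0,1]` fixing the endpoints. -/
def IsTimeChange (l : I → I) : Prop := Continuous l ∧ StrictMono l ∧ l 0 = 0 ∧ l 1 = 1

/-- Convergence in the (strong) Skorokhod `J₁`-topology. -/
def J1Tendsto (xn : ℕ → I → ℝ) (x : I → ℝ) : Prop :=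
  ∃ l : ℕ → I → I, (∀ n, IsTimeChange (l n)) ∧
    Tendsto (fun n => dNorm (fun τ => (l n τ : ℝ) - (τ : ℝ))) atTop (𝓝 0) ∧
    Tendsto (fun n => dNorm (fun τ => xn n (l n τ) - x τ)) atTop (𝓝 0)

/-- `Ã_τ(x)`: the times `s ∈ (0,τ]` of the largest modulus jump of `x` on `[0,τ]`
(empty when `S̃_Δ(x)(τ) = 0`). -/
def tildeA (x : I → ℝ) (τ : I) : Set I :=
  {s : I | 0 < s ∧ s ≤ τ ∧ 0 < |jump x s| ∧ |jump x s| = modJumpSup x τ}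

/-- `A⁺_τ(x)`: the times `s ∈ (0,τ]` of the largest positive jump of `x` on `[0,τ]`
(empty when `S_{+Δ}(x)(τ) = 0`). -/
def posA (x : I → ℝ) (τ : I) : Set I :=
  {s : I | 0 < s ∧ s ≤ τ ∧ 0 < jump x s ∧ jump x s = posJumpSup x τ}

/-- The signed largest-modulus ("trim as you go") trimmer `𝔗_rim`:
`𝔗_rim(x)(τ) = x(τ) - Δx(L̃_τ(x))` if `Ã_τ(x) ≠ ∅`, `x(τ)` otherwise, where
`L̃_τ(x) = max Ã_τ(x)`. -/
def sgnModTrim (x : I → ℝ) : I → ℝ := fun τ =>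
  if (tildeA x τ).Nonempty then x τ - jump x (sSup (tildeA x τ)) else x τ

/-- The record time ("lookback") trimmer:
`R_trim(x) = x - Δx(R₁(x))·1_{[R₁(x),1]}` if `A⁺₁(x) ≠ ∅`, `x` otherwise, where
`R₁(x) = min A⁺₁(x)`. -/
def recordTrim (x : I → ℝ) : I → ℝ := fun τ =>
  if (posA x 1).Nonempty ∧ sInf (posA x 1) ≤ τ then x τ - jump x (sInf (posA x 1)) else x τ

/-- The modulus record time trimmer:
`R̃_trim(x) = x - Δx(R̃₁(x))·1_{[R̃₁(x),1]}` if `Ã₁(x) ≠ ∅`, `x` otherwise, where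
`R̃₁(x) = min Ã₁(x)`. -/
def modRecordTrim (x : I → ℝ) : I → ℝ := fun τ =>
  if (tildeA x 1).Nonempty ∧ sInf (tildeA x 1) ≤ τ then x τ - jump x (sInf (tildeA x 1)) else x τ

open Function

theorem tendsto_leftLim_nhdsLT_of_tendsto {α β : Type*} [TopologicalSpace α] [LinearOrder α]
    [OrderTopology α] [DenselyOrdered α] [TopologicalSpace β] [RegularSpace β] {f : α → β}
    (hf : ∀ τ, ∃ y, Tendsto f (𝓝[<] τ) (𝓝 y)) {a : α} {L : β}
    (h : Tendsto f (𝓝[<] a) (𝓝 L)) : Tendsto (leftLim f) (𝓝[<] a) (𝓝 L) := by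
  by_cases ha : IsMin a
  · simp [Iio_eq_empty_iff.2 ha]
  obtain ⟨l', hl'⟩ := not_isMin_iff.1 ha
  refine (closed_nhds_basis L).tendsto_right_iff.2 fun F ⟨hF, hFc⟩ => ?_
  obtain ⟨v, hv, hsub⟩ := (mem_nhdsLT_iff_exists_Ioo_subset' hl').1 (h hF)
  filter_upwards [Ioo_mem_nhdsLT hv] with τ hτ
  have := nhdsLT_neBot_of_exists_lt ⟨v, hτ.1⟩
  refine hFc.mem_of_tendsto (tendsto_leftLim_of_tendsto (hf τ)) ?_
  filter_upwards [Ioo_mem_nhdsLT hτ.1] with w hw using hsub ⟨hw.1, hw.2.trans hτ.2⟩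

-- `𝓝[<] 0 = ⊥`, so `leftLim x 0` is the junk value `x 0`, matching `Δx(0) = 0`.
theorem jump_eq_sub_leftLim (x : I → ℝ) (τ : I) : jump x τ = x τ - leftLim x τ := by
  unfold jump
  split_ifs with hτ
  · rw [hτ, leftLim_eq_of_isBot fun _ => nonneg', sub_self]
  · rfl

theorem jump_eq_sub_of_tendsto {x : I → ℝ} {τ : I} (hτ : τ ≠ 0) {L : ℝ}
    (h : Tendsto x (𝓝[<] τ) (𝓝 L)) : jump x τ = x τ - L := by
  have := nhdsLT_neBot_of_exists_lt ⟨0, lt_of_le_of_ne nonneg' hτ.symm⟩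
  rw [jump_eq_sub_leftLim, leftLim_eq_of_tendsto h]

namespace Cadlag

variable {x y : I → ℝ}

theorem tendsto_nhdsGE (hx : Cadlag x) (τ : I) : Tendsto x (𝓝[≥] τ) (𝓝 (x τ)) :=
  continuousWithinAt_Ioi_iff_Ici.1 (hx.1 τ)

theorem tendsto_leftLim (hx : Cadlag x) (τ : I) : Tendsto x (𝓝[<] τ) (𝓝 (leftLim x τ)) :=
  tendsto_leftLim_of_tendsto (hx.2 τ)

theorem tendsto_nhds_sup (hx : Cadlag x) (τ : I) :
    Tendsto x (𝓝 τ) (𝓝 (leftLim x τ) ⊔ 𝓝 (x τ)) := by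
  rw [← nhdsLT_sup_nhdsGE]
  exact (hx.tendsto_leftLim τ).sup_sup (hx.tendsto_nhdsGE τ)

theorem exists_bound (hx : Cadlag x) : ∃ M, ∀ τ, |x τ| ≤ M := by
  have hloc (τ : I) : ∃ t ∈ 𝓝 τ, Bornology.IsBounded (x '' t) :=
    ⟨_, hx.tendsto_nhds_sup τ (union_mem_sup (Metric.ball_mem_nhds _ one_pos)
      (Metric.ball_mem_nhds _ one_pos)),
      (Metric.isBounded_ball.union Metric.isBounded_ball).subset (image_preimage_subset _ _)⟩
  obtain ⟨M, hM⟩ := isBounded_iff_forall_norm_le.1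
    (Bornology.isBounded_image_of_isLocallyBounded_of_isCompact isCompact_univ hloc)
  exact ⟨M, fun τ => hM _ (mem_image_of_mem x (mem_univ τ))⟩

theorem add_smul (hx : Cadlag x) (hy : Cadlag y) (a : ℝ) : Cadlag (x + a • y) :=
  ⟨fun τ => (hx.1 τ).add ((hy.1 τ).const_smul a),
    fun τ => ⟨_, (hx.tendsto_leftLim τ).add ((hy.tendsto_leftLim τ).const_smul a)⟩⟩

theorem leftLim_add_smul (hx : Cadlag x) (hy : Cadlag y) (a : ℝ) (τ : I) :
    leftLim (x + a • y) τ = leftLim x τ + a * leftLim y τ := by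
  rcases eq_or_neBot (𝓝[<] τ) with h | h
  · simp [leftLim_eq_of_eq_bot _ h]
  · exact leftLim_eq_of_tendsto
      ((hx.tendsto_leftLim τ).add ((hy.tendsto_leftLim τ).const_smul a))

theorem jump_add_smul (hx : Cadlag x) (hy : Cadlag y) (a : ℝ) (τ : I) :
    jump (x + a • y) τ = jump x τ + a * jump y τ := by
  simp only [jump_eq_sub_leftLim, hx.leftLim_add_smul hy, Pi.add_apply, Pi.smul_apply,
    smul_eq_mul]
  ring

theorem tendsto_jump_nhdsLT (hx : Cadlag x) (τ : I) : Tendsto (jump x) (𝓝[<] τ) (𝓝 0) := by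
  have h := (hx.tendsto_leftLim τ).sub
    (tendsto_leftLim_nhdsLT_of_tendsto hx.2 (hx.tendsto_leftLim τ))
  rw [sub_self] at h
  exact h.congr fun s => (jump_eq_sub_leftLim x s).symm

theorem eq_zero_of_jump_eq_on_Ioo (hx : Cadlag x) {a b : I} (hab : a < b) {c : ℝ}
    (hc : ∀ τ ∈ Ioo a b, jump x τ = c) : c = 0 := by
  have := nhdsLT_neBot_of_exists_lt ⟨a, hab⟩
  refine tendsto_nhds_unique ?_ (hx.tendsto_jump_nhdsLT b)
  exact tendsto_const_nhds.congr'
    (eventually_of_mem (Ioo_mem_nhdsLT hab) fun τ hτ => (hc τ hτ).symm)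

end Cadlag

def step (t : I) : I → ℝ := (Ici t).indicator 1

theorem tendsto_step_nhdsGT (t τ : I) : Tendsto (step t) (𝓝[>] τ) (𝓝 (step t τ)) := by
  refine tendsto_const_nhds.congr' ?_
  rcases le_or_gt t τ with htτ | hτt
  · filter_upwards [self_mem_nhdsWithin] with w hw
    simp [step, htτ, htτ.trans (le_of_lt hw)]
  · filter_upwards [mem_nhdsWithin_of_mem_nhds (isOpen_Iio.mem_nhds hτt)] with w hw
    simp [step, not_le.2 hτt, not_le.2 (mem_Iio.1 hw)]

theorem tendsto_step_nhdsLT (t τ : I) :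
    Tendsto (step t) (𝓝[<] τ) (𝓝 (if t < τ then 1 else 0)) := by
  refine tendsto_const_nhds.congr' ?_
  rcases lt_or_ge t τ with htτ | hτt
  · filter_upwards [mem_nhdsWithin_of_mem_nhds (isOpen_Ioi.mem_nhds htτ)] with w hw
    simp [step, htτ, le_of_lt (mem_Ioi.1 hw)]
  · filter_upwards [self_mem_nhdsWithin] with w hw
    simp [step, not_lt.2 hτt, not_le.2 ((mem_Iio.1 hw).trans_le hτt)]

theorem cadlag_step (t : I) : Cadlag (step t) :=
  ⟨tendsto_step_nhdsGT t, fun τ => ⟨_, tendsto_step_nhdsLT t τ⟩⟩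

theorem jump_step {t : I} (ht : t ≠ 0) (τ : I) : jump (step t) τ = if τ = t then 1 else 0 := by
  rcases eq_or_ne τ 0 with rfl | hτ
  · simp [jump, ht.symm]
  rw [jump_eq_sub_of_tendsto hτ (tendsto_step_nhdsLT t τ)]
  rcases lt_trichotomy τ t with hτt | rfl | htτ
  · simp [step, not_le.2 hτt, not_lt.2 hτt.le, hτt.ne]
  · simp [step]
  · simp [step, htτ.le, htτ, htτ.ne']

theorem jump_le_posJumpSup {x : I → ℝ} {τ u : I} (hpos : 0 < posJumpSup x τ) (hu : u ≤ τ) :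
    jump x u ≤ posJumpSup x τ := by
  have hbdd : BddAbove (jump x '' {s | s ≤ τ}) := by
    by_contra hb
    rw [posJumpSup, Real.sSup_of_not_bddAbove hb] at hpos
    exact hpos.false
  exact le_csSup hbdd ⟨u, hu, rfl⟩

section Perturbation

variable {x : I → ℝ} {t : I} {a : ℝ}

theorem posJumpSup_add_smul_step (hx : Cadlag x) (ht : t ∈ posA x 1) (ha : 0 ≤ a) :
    posJumpSup (x + a • step t) 1 = posJumpSup x 1 + a := by
  obtain ⟨ht0, -, htpos, htmax⟩ := ht
  have hjump := hx.jump_add_smul (cadlag_step t) a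
  refine IsGreatest.csSup_eq ⟨⟨t, le_one', ?_⟩, ?_⟩
  · simp [hjump, jump_step ht0.ne', htmax]
  · rintro _ ⟨u, -, rfl⟩
    rw [hjump, jump_step ht0.ne']
    split_ifs with hut
    · simp [hut, htmax]
    · simpa using (jump_le_posJumpSup (htmax ▸ htpos) le_one').trans (le_add_of_nonneg_right ha)

theorem posA_add_smul_step (hx : Cadlag x) (ht : t ∈ posA x 1) (ha : 0 < a) :
    posA (x + a • step t) 1 = {t} := by
  have hsup := posJumpSup_add_smul_step hx ht ha.le
  obtain ⟨ht0, -, htpos, htmax⟩ := ht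
  have hjump := hx.jump_add_smul (cadlag_step t) a
  ext u
  simp only [posA, mem_ofPred_eq, mem_singleton_iff, hsup, hjump, jump_step ht0.ne']
  constructor
  · rintro ⟨-, -, -, hu⟩
    by_contra hut
    have := jump_le_posJumpSup (htmax ▸ htpos) (le_one' (t := u))
    simp only [hut, if_false] at hu
    linarith
  · rintro rfl
    simp only [if_true]
    exact ⟨ht0, le_one', by linarith, by rw [htmax, mul_one]⟩

theorem recordTrim_eq_of_nonempty (h : (posA x 1).Nonempty) :
    recordTrim x = x + (-jump x (sInf (posA x 1))) • step (sInf (posA x 1)) := by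
  ext τ
  by_cases hτ : sInf (posA x 1) ≤ τ
  · simp [recordTrim, h, hτ, step, sub_eq_add_neg]
  · simp [recordTrim, hτ, step]

theorem recordTrim_add_smul_step (hx : Cadlag x) (ht : t ∈ posA x 1) (ha : 0 < a) :
    recordTrim (x + a • step t) = x + (-posJumpSup x 1) • step t := by
  have hA := posA_add_smul_step hx ht ha
  rw [recordTrim_eq_of_nonempty (hA ▸ singleton_nonempty t), hA, csInf_singleton,
    hx.jump_add_smul (cadlag_step t), jump_step ht.1.ne', if_pos rfl, ht.2.2.2]
  ext τ
  simp only [Pi.add_apply, Pi.smul_apply, smul_eq_mul]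
  ring

end Perturbation

theorem tendsto_apply_of_tendsto_dNorm {f : ℕ → I → ℝ} (hf : ∀ n, ∃ M, ∀ τ, |f n τ| ≤ M)
    (h : Tendsto (fun n => dNorm (f n)) atTop (𝓝 0)) (τ : I) :
    Tendsto (fun n => f n τ) atTop (𝓝 0) := by
  refine squeeze_zero_norm (fun n => ?_) h
  obtain ⟨M, hM⟩ := hf n
  exact le_ciSup (f := fun τ => |f n τ|) ⟨M, by rintro _ ⟨s, rfl⟩; exact hM s⟩ τ

theorem J1Tendsto.of_tendsto_dNorm {xn : ℕ → I → ℝ} {x : I → ℝ}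
    (h : Tendsto (fun n => dNorm (xn n - x)) atTop (𝓝 0)) : J1Tendsto xn x :=
  ⟨fun _ => id, fun _ => ⟨continuous_id, strictMono_id, rfl, rfl⟩,
    by simp [dNorm], h⟩

theorem J1Tendsto.add_smul_step (x : I → ℝ) (t : I) {e : ℕ → ℝ}
    (he : Tendsto e atTop (𝓝 0)) : J1Tendsto (fun n => x + e n • step t) x := by
  refine .of_tendsto_dNorm (squeeze_zero (fun n => Real.iSup_nonneg fun _ => abs_nonneg _)
    (fun n => ciSup_le fun τ => ?_) (by simpa using he.abs))
  by_cases htτ : t ≤ τ <;> simp [step, htτ]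

theorem J1Tendsto.apply_eq_leftLim_or_eq_of_const {y z : I → ℝ} (hy : Cadlag y)
    (hz : ∃ M, ∀ τ, |z τ| ≤ M) (h : J1Tendsto (fun _ => y) z) (τ : I) :
    z τ = leftLim y τ ∨ z τ = y τ := by
  obtain ⟨l, -, hl, hyz⟩ := h
  obtain ⟨My, hMy⟩ := hy.exists_bound
  obtain ⟨Mz, hMz⟩ := hz
  have hlτ : Tendsto (fun n => l n τ) atTop (𝓝 τ) := by
    rw [tendsto_subtype_rng, ← tendsto_sub_nhds_zero_iff]
    refine tendsto_apply_of_tendsto_dNorm (fun n => ⟨1, fun s => ?_⟩) hl τ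
    rw [abs_sub_le_iff]
    constructor <;> linarith [(l n s).2.1, (l n s).2.2, s.2.1, s.2.2]
  have hyτ : Tendsto (fun n => y (l n τ)) atTop (𝓝 (z τ)) := by
    rw [← tendsto_sub_nhds_zero_iff]
    refine tendsto_apply_of_tendsto_dNorm (fun n => ⟨My + Mz, fun s => ?_⟩) hyz τ
    exact (abs_sub _ _).trans (add_le_add (hMy _) (hMz s))
  have hne : NeBot (𝓝 (z τ) ⊓ (𝓝 (leftLim y τ) ⊔ 𝓝 (y τ))) :=
    (tendsto_inf.2 ⟨hyτ, (hy.tendsto_nhds_sup τ).comp hlτ⟩).neBot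
  rw [inf_sup_left, sup_neBot] at hne
  exact hne.imp eq_of_nhds_neBot eq_of_nhds_neBot

def J1ContinuousAt (F : (I → ℝ) → I → ℝ) (x : I → ℝ) : Prop :=
  ∀ xn : ℕ → I → ℝ, (∀ n, Cadlag (xn n)) → J1Tendsto xn x → J1Tendsto (fun n => F (xn n)) (F x)

section RecordTrim

variable {x : I → ℝ} {s t : I}

theorem J1ContinuousAt.j1Tendsto_recordTrim (hcont : J1ContinuousAt recordTrim x)
    (hx : Cadlag x) (ht : t ∈ posA x 1) :
    J1Tendsto (fun _ => x + (-posJumpSup x 1) • step t) (recordTrim x) := by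
  have hJ1 := hcont _ (fun n => hx.add_smul (cadlag_step t) _)
    (J1Tendsto.add_smul_step x t tendsto_one_div_add_atTop_nhds_zero_nat)
  simpa only [recordTrim_add_smul_step hx ht Nat.one_div_pos_of_nat] using hJ1

theorem J1ContinuousAt.not_lt_of_mem_posA (hcont : J1ContinuousAt recordTrim x)
    (hx : Cadlag x) (hs : s ∈ posA x 1) (ht : t ∈ posA x 1) : ¬s < t := by
  intro hst
  set h := posJumpSup x 1
  have hjt : jump x t = h := ht.2.2.2
  have hh : 0 < h := hjt ▸ ht.2.2.1
  set y := x + (-h) • step t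
  have hy : Cadlag y := hx.add_smul (cadlag_step t) _
  have hjump (τ : I) : jump y τ = jump x τ - h * if τ = t then 1 else 0 := by
    rw [hx.jump_add_smul (cadlag_step t), jump_step ht.1.ne']
    ring
  have hz := recordTrim_eq_of_nonempty ⟨t, ht⟩
  set r := sInf (posA x 1)
  have hzτ (τ : I) (hτ : s ≤ τ) : recordTrim x τ = x τ - jump x r := by
    have hrτ : r ≤ τ := (sInf_le hs).trans hτ
    simp [hz, step, hrτ, sub_eq_add_neg]
  have hlim (τ : I) : recordTrim x τ = y τ - jump y τ ∨ recordTrim x τ = y τ := by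
    rw [jump_eq_sub_leftLim, sub_sub_cancel]
    exact (hcont.j1Tendsto_recordTrim hx ht).apply_eq_leftLim_or_eq_of_const hy
      (hz ▸ (hx.add_smul (cadlag_step r) _).exists_bound) τ
  have hr : jump x r = h := by
    have hyt : y t = x t - h := by simp [y, step, sub_eq_add_neg]
    rcases hlim t with hτ | hτ <;>
      simp only [hzτ t hst.le, hyt, hjump, if_true, hjt] at hτ <;> linarith
  have hconst (τ : I) (hτ : τ ∈ Ioo s t) : jump x τ = h := by
    have hyτ : y τ = x τ := by simp [y, step, not_le.2 hτ.2]
    rcases hlim τ with hτ' | hτ' <;>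
      simp only [hzτ τ hτ.1.le, hyτ, hjump, if_neg hτ.2.ne, hr] at hτ' <;> linarith
  exact hh.ne' (hx.eq_zero_of_jump_eq_on_Ioo hst hconst)

end RecordTrim

/-- if the record time trimmer `R_trim` is `J₁`-continuous at `x ∈ 𝔻`,
then `#A⁺₁(x) ≤ 1`. -/
theorem stmt12 (x : I → ℝ) (hx : Cadlag x)
    (hcont : ∀ xn : ℕ → I → ℝ, (∀ n, Cadlag (xn n)) → J1Tendsto xn x →
      J1Tendsto (fun n => recordTrim (xn n)) (recordTrim x)) :
    (posA x 1).Subsingleton := fun _ hs _ ht =>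
  le_antisymm (not_lt.1 (J1ContinuousAt.not_lt_of_mem_posA hcont hx ht hs))
    (not_lt.1 (J1ContinuousAt.not_lt_of_mem_posA hcont hx hs ht))

end
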